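/- arXiv:0905.1520 — 7 statements merged into one kernel-verified Lean document; each statement's English description precedes it below -/
import Mathlib

section
/- Let X be a compactum. Then X is an approximative absolute retract (AAR) if and only if the following approximate extension property holds: whenever Z is a closed subset of a compactum Y and f : Z → X is continuous, there is a sequence of continuous maps gₙ : Y → X whose restrictions to Z converge uniformly to f (with respect to any compatible metric on X). -/
open Filter Topology Set TopologicalSpace

/-- `F n` converges uniformly to `f` with respect to every metric on `X`
compatible with its topology. (On a compactum all compatible metrics are
uniformly equivalent, so this is the usual notion of uniform convergence
"with respect to any compatible metric".) -/
def TendstoUniformlyCompat {Z X : Type*} [tX : TopologicalSpace X]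
    (F : ℕ → Z → X) (f : Z → X) : Prop :=
  ∀ m : MetricSpace X, m.toUniformSpace.toTopologicalSpace = tX →
    @TendstoUniformly Z X ℕ m.toUniformSpace F f atTop

/-- A (compact metrizable) space `X` is an approximative absolute retract:
for every compactum `Y` and every topological embedding `ι : X → Y` with closed
image there is a sequence of continuous maps `rₙ : Y → X` with `rₙ ∘ ι`
converging uniformly to the identity of `X`. -/
def IsAAR (X : Type*) [TopologicalSpace X] : Prop :=
  ∀ (Y : Type*) [TopologicalSpace Y] [CompactSpace Y] [MetrizableSpace Y]
    (ι : X → Y), Topology.IsEmbedding ι → IsClosed (Set.range ι) →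
    ∃ r : ℕ → Y → X, (∀ n, Continuous (r n)) ∧
      TendstoUniformlyCompat (fun n x => r n (ι x)) id

/-!
A compactum `X` embeds as a closed subset of the Hilbert cube `Q`, which has the Tietze extension
property. Given approximate retractions `rₙ : Q → X`, a map `f : Z → X` on a closed subset of `Y`
is approximated by `rₙ ∘ G`, where `G : Y → Q` extends `f`. Conversely, if `X` is closed in `Y`,
embed `Y` in `Q` and approximately extend the inverse of `X ↪ Q` to all of `Q`.
-/

universe u v w

def ApproxExtensionProperty (X : Type u) [TopologicalSpace X] : Prop :=
  ∀ (Y : Type v) [TopologicalSpace Y] [CompactSpace Y] [MetrizableSpace Y]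
    (Z : Set Y), IsClosed Z → ∀ f : Z → X, Continuous f →
    ∃ g : ℕ → Y → X, (∀ n, Continuous (g n)) ∧
      TendstoUniformlyCompat (fun n (z : Z) => g n (z : Y)) f

theorem TendstoUniformlyCompat.comp {W Z X : Type*} [TopologicalSpace X] {F : ℕ → Z → X}
    {f : Z → X} (h : TendstoUniformlyCompat F f) (g : W → Z) :
    TendstoUniformlyCompat (fun n => F n ∘ g) (f ∘ g) :=
  fun m hm => (h m hm).comp g

instance ULift.metrizableSpace {α : Type*} [TopologicalSpace α] [MetrizableSpace α] :
    MetrizableSpace (ULift.{v} α) :=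
  Homeomorph.ulift.isEmbedding.metrizableSpace

instance ULift.tietzeExtension {α : Type*} [TopologicalSpace α] [TietzeExtension.{w} α] :
    TietzeExtension.{w} (ULift.{v} α) :=
  .of_homeo Homeomorph.ulift

abbrev HilbertCube : Type u := ULift.{u} (ℕ → unitInterval)

theorem exists_isClosedEmbedding_hilbertCube (X : Type*) [TopologicalSpace X] [CompactSpace X]
    [MetrizableSpace X] : ∃ ι : X → HilbertCube.{u}, IsClosedEmbedding ι := by
  let := metrizableSpaceMetric X
  obtain ⟨F, hF⟩ := Metric.PiNatEmbed.exists_embedding_to_hilbert_cube (X := X)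
  have hι : IsEmbedding (ULift.up ∘ F) := Homeomorph.ulift.symm.isEmbedding.comp hF
  exact ⟨_, hι.continuous.isClosedEmbedding hι.injective⟩

theorem IsAAR.approxExtensionProperty {X : Type u} [TopologicalSpace X] [CompactSpace X]
    [MetrizableSpace X] (hX : IsAAR.{u, v} X) : ApproxExtensionProperty.{u, w} X := by
  intro Y _ _ _ Z hZ f hf
  obtain ⟨ι, hι⟩ := exists_isClosedEmbedding_hilbertCube.{v} X
  obtain ⟨r, hr, hrι⟩ := hX _ ι hι.isEmbedding hι.isClosed_range
  obtain ⟨G, hG⟩ := ContinuousMap.exists_restrict_eq hZ ⟨ι ∘ f, hι.continuous.comp hf⟩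
  have hGZ (z : Z) : G z = ι (f z) := DFunLike.congr_fun hG z
  refine ⟨fun n => r n ∘ G, fun n => (hr n).comp G.continuous, ?_⟩
  simpa only [Function.comp_def, hGZ, id_eq] using hrι.comp f

theorem isAAR_of_approxExtensionProperty {X : Type u} [TopologicalSpace X]
    (hX : ApproxExtensionProperty.{u, w} X) : IsAAR.{u, v} X := by
  intro Y _ _ _ ι hι hιZ
  obtain ⟨k, hk⟩ := exists_isClosedEmbedding_hilbertCube.{w} Y
  have hκ : IsClosedEmbedding (k ∘ ι) := hk.comp ⟨hι, hιZ⟩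
  let e : X ≃ₜ range (k ∘ ι) := hκ.isEmbedding.toHomeomorph
  obtain ⟨g, hg, hgκ⟩ := hX _ _ hκ.isClosed_range e.symm e.symm.continuous
  refine ⟨fun n => g n ∘ k, fun n => (hg n).comp hk.continuous, ?_⟩
  have hgι := hgκ.comp e
  simp only [Function.comp_def, e.symm_apply_apply] at hgι
  exact hgι

theorem statement0 (X : Type*) [TopologicalSpace X] [CompactSpace X] [MetrizableSpace X] :
    IsAAR X ↔
      ∀ (Y : Type*) [TopologicalSpace Y] [CompactSpace Y] [MetrizableSpace Y]
        (Z : Set Y), IsClosed Z → ∀ f : Z → X, Continuous f →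
        ∃ g : ℕ → Y → X, (∀ n, Continuous (g n)) ∧
          TendstoUniformlyCompat (fun n (z : Z) => g n (z : Y)) f :=
  ⟨IsAAR.approxExtensionProperty, isAAR_of_approxExtensionProperty⟩
end

section
/- Let X be a compactum and let θₙ : X → X be a sequence of continuous maps converging uniformly to the identity map of X (with respect to a compatible metric on X). If for each n the image θₙ(X), with the subspace topology, is an approximative absolute retract, then X is an approximative absolute retract. -/
open Filter Topology Set TopologicalSpace

/-- A pointed (compact metrizable) space `(X, x₀)` is a pointed approximative
absolute retract: for every compactum `Y` and every topological embedding
`ι : X → Y` with closed image there is a sequence of continuous maps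
`rₙ : Y → X` fixing the base point (`rₙ (ι x₀) = x₀`) with `rₙ ∘ ι`
converging uniformly to the identity of `X`. -/
def IsPointedAAR (X : Type*) [TopologicalSpace X] (x₀ : X) : Prop :=
  ∀ (Y : Type*) [TopologicalSpace Y] [CompactSpace Y] [MetrizableSpace Y]
    (ι : X → Y), Topology.IsEmbedding ι → IsClosed (Set.range ι) →
    ∃ r : ℕ → Y → X, (∀ n, Continuous (r n)) ∧ (∀ n, r n (ι x₀) = x₀) ∧
      TendstoUniformlyCompat (fun n x => r n (ι x)) id

/-! An AAR `A` is an approximate extensor: a map `g : Z → A` from a closed subspace of a normal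
space `Y` extends, up to any `ε > 0`, to `Y`. Indeed, embed `A` in the Hilbert cube, extend `g` into
the cube by Tietze, and follow it by an approximate retraction onto `A`. Applied to
`θₙ ∘ ι⁻¹ : ι(X) → θₙ(X)` with `ε = 1/(n+1)`, this gives `rₙ : Y → X` with
`d(rₙ(ι x), x) ≤ 1/(n+1) + d(θₙ x, x)`, which tends to `0` uniformly in `x`. -/

universe u v

theorem tendstoUniformlyCompat_of_tendstoUniformly {Z X : Type*} [mX : MetricSpace X]
    [CompactSpace X] {F : ℕ → Z → X} {f : Z → X} (h : TendstoUniformly F f atTop) :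
    TendstoUniformlyCompat F f := by
  intro m hm
  have hu : m.toUniformSpace = mX.toUniformSpace :=
    @unique_uniformity_of_compact X mX.toUniformSpace.toTopologicalSpace _ _ _ hm rfl
  rwa [hu]

theorem TendstoUniformly.of_dist_le {ι Z X : Type*} [PseudoMetricSpace X] {l : Filter ι}
    {F G : ι → Z → X} {f : Z → X} {δ : ι → ℝ} (hF : TendstoUniformly F f l)
    (hδ : Tendsto δ l (𝓝 0)) (hGF : ∀ i z, dist (G i z) (F i z) ≤ δ i) :
    TendstoUniformly G f l := by
  rw [Metric.tendstoUniformly_iff] at hF ⊢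
  intro ε hε
  filter_upwards [hF (ε / 2) (half_pos hε), hδ.eventually (gt_mem_nhds (half_pos hε))]
    with i hFi hδi z
  calc dist (f z) (G i z) ≤ dist (f z) (F i z) + dist (G i z) (F i z) := dist_triangle_right _ _ _
    _ < ε / 2 + ε / 2 := add_lt_add_of_lt_of_le (hFi z) ((hGF i z).trans hδi.le)
    _ = ε := add_halves ε

/-- The cube is indexed by `ULift ℕ` so that it lies in any prescribed universe: `IsAAR` only
speaks about compacta of one universe. -/
theorem exists_isClosedEmbedding_hilbertCube_s2 (A : Type*) [MetricSpace A] [CompactSpace A] :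
    ∃ e : A → (ULift.{v} ℕ → unitInterval), IsClosedEmbedding e := by
  rcases isEmpty_or_nonempty A with hA | hA
  · exact ⟨isEmptyElim, continuous_of_discreteTopology.isClosedEmbedding
      (Function.injective_of_subsingleton _)⟩
  let u := denseSeq A
  refine ⟨fun a k => projIcc 0 1 zero_le_one (dist a (u k.down)), Continuous.isClosedEmbedding
    (continuous_pi fun k => continuous_projIcc.comp (continuous_id.dist continuous_const)) ?_⟩
  intro a a' h
  have heq : (fun z => projIcc (0 : ℝ) 1 zero_le_one (dist a z)) =
      fun z => projIcc 0 1 zero_le_one (dist a' z) :=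
    (denseRange_denseSeq A).equalizer
      (continuous_projIcc.comp (continuous_const.dist continuous_id))
      (continuous_projIcc.comp (continuous_const.dist continuous_id))
      (funext fun k => congrFun h ⟨k⟩)
  have hzero : projIcc (0 : ℝ) 1 zero_le_one (dist a a') = 0 := by
    simpa using congrFun heq a'
  exact dist_le_zero.mp (projIcc_eq_zero.mp hzero)

theorem IsAAR.exists_dist_lt_of_isClosedEmbedding {A : Type u} [MetricSpace A] [CompactSpace A]
    (hA : IsAAR.{u, v} A) {Z Y : Type*} [TopologicalSpace Z] [TopologicalSpace Y] [NormalSpace Y]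
    {ι : Z → Y} (hι : IsClosedEmbedding ι) (g : C(Z, A)) {ε : ℝ} (hε : 0 < ε) :
    ∃ f : C(Y, A), ∀ z, dist (f (ι z)) (g z) < ε := by
  obtain ⟨e, he⟩ := exists_isClosedEmbedding_hilbertCube_s2.{v} A
  obtain ⟨s, hs, hse⟩ := hA _ e he.isEmbedding he.isClosed_range
  obtain ⟨k, hk⟩ := (Metric.tendstoUniformly_iff.mp (hse _ rfl) ε hε).exists
  obtain ⟨G, hG⟩ := (ContinuousMap.comp ⟨e, he.continuous⟩ g).exists_extension' hι
  refine ⟨⟨s k ∘ G, (hs k).comp G.continuous⟩, fun z => ?_⟩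
  have hGz : G (ι z) = e (g z) := congrFun hG z
  simpa [hGz, dist_comm] using hk (g z)

theorem statement2 (X : Type*) [TopologicalSpace X] [CompactSpace X] [MetrizableSpace X]
    (θ : ℕ → X → X) (hcont : ∀ n, Continuous (θ n))
    (hconv : TendstoUniformlyCompat (fun n x => θ n x) id)
    (hAAR : ∀ n, IsAAR (Set.range (θ n))) :
    IsAAR X := by
  intro Y _ _ _ ι hι hclosed
  let := metrizableSpaceMetric X
  have happrox : ∀ n : ℕ, ∃ f : C(Y, range (θ n)),
      ∀ x, dist (f (ι x)) (rangeFactorization (θ n) x) < 1 / ((n : ℝ) + 1) := fun n =>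
    haveI := isCompact_iff_compactSpace.mp (isCompact_range (hcont n))
    (hAAR n).exists_dist_lt_of_isClosedEmbedding ⟨hι, hclosed⟩
      ⟨_, (hcont n).rangeFactorization⟩ Nat.one_div_pos_of_nat
  choose f hf using happrox
  refine ⟨fun n y => f n y, fun n => continuous_subtype_val.comp (f n).continuous, ?_⟩
  exact tendstoUniformlyCompat_of_tendstoUniformly <|
    (hconv _ rfl).of_dist_le tendsto_one_div_add_atTop_nhds_zero_nat fun n x => (hf n x).le
end

section
/- Let X be a compactum, let θₙ : X → X be a sequence of continuous maps converging uniformly to the identity map of X (with respect to a compatible metric on X), and let x₀ ∈ X be a point with θₙ(x₀) = x₀ for all n. If for each n the pair (θₙ(X), x₀), where θₙ(X) carries the subspace topology, is a pointed approximative absolute retract, then (X, x₀) is a pointed approximative absolute retract. -/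
/-!
Embed `X` as a closed subset of a compactum `Y` and `θₙ(X)` into the Hilbert cube `Q`. By Tietze,
the map `θₙ ∘ ι⁻¹ : ι(X) → θₙ(X) ⊆ Q` extends to `Y → Q`, so on `ι(X)` it is exactly `θₙ`. As
`θₙ(X)` is a pointed AAR, some pointed map `Q → θₙ(X)` is uniformly close to the identity on
`θₙ(X)`; the composite `Y → X` is pointed and uniformly close to `θₙ` on `X`, hence close to the
identity once `n` is large.
-/

open Filter Topology Set TopologicalSpace

universe u v w

instance ULift.instMetrizableSpace {X : Type*} [TopologicalSpace X] [MetrizableSpace X] :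
    MetrizableSpace (ULift X) :=
  Homeomorph.ulift.isEmbedding.metrizableSpace

instance ULift.instTietzeExtension {Z : Type w} [TopologicalSpace Z]
    [TietzeExtension.{u, w} Z] : TietzeExtension.{u, max w v} (ULift.{v} Z) :=
  .of_homeo Homeomorph.ulift

theorem exists_isClosedEmbedding_ulift_hilbertCube (X : Type u) [TopologicalSpace X]
    [CompactSpace X] [MetrizableSpace X] :
    ∃ e : X → ULift.{v} (ℕ → unitInterval), IsClosedEmbedding e := by
  let := metrizableSpaceMetric X
  obtain ⟨e, he⟩ := Metric.PiNatEmbed.exists_embedding_to_hilbert_cube (X := X)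
  have hup := Homeomorph.ulift.{v}.symm.isEmbedding.comp he
  exact ⟨_, hup.continuous.isClosedEmbedding hup.injective⟩

theorem TendstoUniformly.tendstoUniformlyCompat {Z X : Type*} [m₀ : MetricSpace X]
    [CompactSpace X] {F : ℕ → Z → X} {f : Z → X} (h : TendstoUniformly F f atTop) :
    TendstoUniformlyCompat F f := fun _ hm =>
  @unique_uniformity_of_compact X m₀.toUniformSpace.toTopologicalSpace _ _ m₀.toUniformSpace
    hm rfl ▸ h

theorem IsPointedAAR.exists_dist_lt {A : Type u} [MetricSpace A] {a₀ : A}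
    (hA : IsPointedAAR.{u, v} A a₀) {Q : Type v} [TopologicalSpace Q] [CompactSpace Q]
    [MetrizableSpace Q] {j : A → Q} (hj : IsClosedEmbedding j) {ε : ℝ} (hε : 0 < ε) :
    ∃ s : Q → A, Continuous s ∧ s (j a₀) = a₀ ∧ ∀ a, dist a (s (j a)) < ε := by
  obtain ⟨s, hs, hs₀, hconv⟩ := hA Q j hj.isEmbedding hj.isClosed_range
  obtain ⟨k, hk⟩ := (Metric.tendstoUniformly_iff.mp (hconv _ rfl) ε hε).exists
  exact ⟨s k, hs k, hs₀ k, hk⟩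

theorem IsPointedAAR.of_forall_exists_dist_lt {X : Type u} [MetricSpace X] [CompactSpace X]
    {x₀ : X}
    (h : ∀ (Y : Type v) [TopologicalSpace Y] [CompactSpace Y] [MetrizableSpace Y] (ι : X → Y),
      IsClosedEmbedding ι → ∀ ε > 0,
        ∃ r : Y → X, Continuous r ∧ r (ι x₀) = x₀ ∧ ∀ x, dist x (r (ι x)) < ε) :
    IsPointedAAR.{u, v} X x₀ := by
  intro Y _ _ _ ι hι hclosed
  choose r hr hr₀ hdist using fun n : ℕ =>
    h Y ι ⟨hι, hclosed⟩ (1 / (n + 1)) Nat.one_div_pos_of_nat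
  refine ⟨r, hr, hr₀, TendstoUniformly.tendstoUniformlyCompat ?_⟩
  refine Metric.tendstoUniformly_iff.mpr fun ε hε => ?_
  filter_upwards [tendsto_one_div_add_atTop_nhds_zero_nat.eventually (gt_mem_nhds hε)]
    with n hn x using (hdist n x).trans hn

theorem exists_dist_lt_of_isPointedAAR_range {X : Type*} [TopologicalSpace X] [CompactSpace X]
    {Z : Type u} [MetricSpace Z] {Y : Type w} [TopologicalSpace Y] [NormalSpace Y]
    {ι : X → Y} (hι : IsClosedEmbedding ι) {f : X → Z} (hf : Continuous f) {x₀ : X} {z₀ : Z}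
    (hfx₀ : f x₀ = z₀) (hA : IsPointedAAR.{u, v} (range f) ⟨z₀, x₀, hfx₀⟩) {ε : ℝ}
    (hε : 0 < ε) :
    ∃ r : Y → Z, Continuous r ∧ r (ι x₀) = z₀ ∧ ∀ x, dist (f x) (r (ι x)) < ε := by
  have : CompactSpace (range f) := isCompact_iff_compactSpace.mp (isCompact_range hf)
  obtain ⟨e, he⟩ := exists_isClosedEmbedding_ulift_hilbertCube.{u, v} (range f)
  obtain ⟨Θ, hΘ⟩ := ContinuousMap.exists_extension' hι
    ⟨e ∘ rangeFactorization f, he.continuous.comp hf.rangeFactorization⟩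
  have hΘι (x : X) : Θ (ι x) = e (rangeFactorization f x) := congrFun hΘ x
  obtain ⟨s, hs, hs₀, hdist⟩ := hA.exists_dist_lt he hε
  refine ⟨fun y => s (Θ y), continuous_subtype_val.comp (hs.comp Θ.continuous), ?_,
    fun x => ?_⟩
  · have hx₀ : rangeFactorization f x₀ = ⟨z₀, x₀, hfx₀⟩ := Subtype.ext hfx₀
    simp only [hΘι, hx₀, hs₀]
  · simpa only [hΘι, Subtype.dist_eq, rangeFactorization_coe] using
      hdist (rangeFactorization f x)

theorem statement6 (X : Type*) [TopologicalSpace X] [CompactSpace X] [MetrizableSpace X]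
    (θ : ℕ → X → X) (hcont : ∀ n, Continuous (θ n))
    (hconv : TendstoUniformlyCompat (fun n x => θ n x) id)
    (x₀ : X) (hfix : ∀ n, θ n x₀ = x₀)
    (hAAR : ∀ n, IsPointedAAR (Set.range (θ n)) ⟨x₀, ⟨x₀, hfix n⟩⟩) :
    IsPointedAAR X x₀ := by
  let := metrizableSpaceMetric X
  refine IsPointedAAR.of_forall_exists_dist_lt fun Y _ _ _ ι hι ε hε => ?_
  obtain ⟨n, hn⟩ :=
    (Metric.tendstoUniformly_iff.mp (hconv _ rfl) (ε / 2) (half_pos hε)).exists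
  obtain ⟨r, hr, hr₀, hdist⟩ :=
    exists_dist_lt_of_isPointedAAR_range hι (hcont n) (hfix n) (hAAR n) (half_pos hε)
  refine ⟨r, hr, hr₀, fun x => ?_⟩
  calc dist x (r (ι x)) ≤ dist x (θ n x) + dist (θ n x) (r (ι x)) := dist_triangle _ _ _
    _ < ε / 2 + ε / 2 := add_lt_add (hn x) (hdist x)
    _ = ε := add_halves ε
end

section
/- Let X be a locally compact, second countable, metrizable Hausdorff space. If the C*-algebra C₀(X, ℂ) of continuous complex-valued functions on X vanishing at infinity is weakly projective, then the one-point compactification X⁺ of X, together with the point ∞ at infinity, is a pointed approximative absolute retract. -/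
open Filter Topology Set TopologicalSpace

open Filter Topology TopologicalSpace

/-- A C⋆-algebra `A` is weakly projective if for all C⋆-algebras `B` and `C`,
every surjective ⋆-homomorphism `ρ : B → C` and every ⋆-homomorphism
`φ : A → C`, there is a sequence of ⋆-homomorphisms `φₙ : A → B` with
`‖ρ (φₙ a) − φ a‖ → 0` for every `a ∈ A`. -/
def WeaklyProjective (A : Type*) [NonUnitalCStarAlgebra A] : Prop :=
  ∀ (B C : Type*) [NonUnitalCStarAlgebra B] [NonUnitalCStarAlgebra C]
    (ρ : B →⋆ₙₐ[ℂ] C), Function.Surjective ρ →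
    ∀ φ : A →⋆ₙₐ[ℂ] C, ∃ φₙ : ℕ → (A →⋆ₙₐ[ℂ] B),
      ∀ a : A, Tendsto (fun n => ‖ρ (φₙ n a) - φ a‖) atTop (𝓝 0)

/-- A C⋆-algebra `A` is weakly projective with respect to unital C⋆-algebras
if for all unital C⋆-algebras `B` and `C`, every unital surjective
⋆-homomorphism `ρ : B → C` and every ⋆-homomorphism `φ : A → C`, there is a
sequence of ⋆-homomorphisms `φₙ : A → B` with `‖ρ (φₙ a) − φ a‖ → 0` for every
`a ∈ A`. -/
def WeaklyProjectiveWrtUnital (A : Type*) [NonUnitalCStarAlgebra A] : Prop :=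
  ∀ (B C : Type*) [CStarAlgebra B] [CStarAlgebra C]
    (ρ : B →⋆ₐ[ℂ] C), Function.Surjective ρ →
    ∀ φ : A →⋆ₙₐ[ℂ] C, ∃ φₙ : ℕ → (A →⋆ₙₐ[ℂ] B),
      ∀ a : A, Tendsto (fun n => ‖ρ (φₙ n a) - φ a‖) atTop (𝓝 0)

open ZeroAtInfty OnePoint

/-!
Let `ι : X⁺ → Y` be an embedding into a compactum and `y₀ = ι ∞`. Restriction along `ι` maps the
functions on `Y` vanishing at `y₀` onto the functions on `X⁺` vanishing at `∞` (Tietze), and the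
latter algebra is `C₀(X, ℂ)`. Weak projectivity gives ⋆-homomorphisms `φₙ` from `C₀(X, ℂ)` to
the functions on `Y` vanishing at `y₀` whose restrictions converge pointwise in norm to the
identity. Since `C(X⁺, ℂ)` is the unitization of `C₀(X, ℂ)`, Gelfand duality turns each `φₙ` into
composition with a continuous `rₙ : Y → X⁺`, and `rₙ y₀ = ∞`. The convergence says that
`a ∘ rₙ ∘ ι → a` uniformly for every `a ∈ C₀(X, ℂ)`; these functions separate the points of the
compactum `X⁺`, which forces `rₙ ∘ ι → id` uniformly.
-/

/-- On a compactum the uniformity is the one induced by any continuous injection into a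
Hausdorff space, here `z ↦ (f i z)ᵢ`. -/
theorem tendstoUniformlyCompat_of_injective {Z ι β : Type*} [TopologicalSpace Z] [CompactSpace Z]
    [UniformSpace β] [T2Space β] {f : ι → Z → β} (hf : ∀ i, Continuous (f i))
    (hinj : Function.Injective fun z i => f i z) {F : ℕ → Z → Z}
    (hF : ∀ i, TendstoUniformly (fun n z => f i (F n z)) (f i) atTop) :
    TendstoUniformlyCompat F id := by
  intro m hm
  let e : Z → ι → β := fun z i => f i z
  let _ := UniformSpace.comap e inferInstance
  have he : IsEmbedding e := ((continuous_pi hf).isClosedEmbedding hinj).isEmbedding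
  rw [unique_uniformity_of_compact hm he.eq_induced.symm, tendstoUniformly_iff_tendsto,
    uniformity_comap, tendsto_comap_iff, Pi.uniformity, tendsto_iInf]
  intro i
  rw [tendsto_comap_iff]
  exact tendstoUniformly_iff_tendsto.1 (hF i)

namespace ZeroAtInftyContinuousMap

variable {X : Type*} [TopologicalSpace X] [T2Space X]

noncomputable def toOnePoint : C₀(X, ℂ) →⋆ₙₐ[ℂ] C(OnePoint X, ℂ) where
  toFun a := OnePoint.continuousMapMk a.toContinuousMap 0
    (by rw [Filter.coclosedCompact_eq_cocompact]; exact zero_at_infty a)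
  map_smul' c a := by ext z; cases z <;> simp [continuousMapMk]
  map_zero' := by ext z; cases z <;> simp [continuousMapMk]
  map_add' a b := by ext z; cases z <;> simp [continuousMapMk]
  map_mul' a b := by ext z; cases z <;> simp [continuousMapMk]
  map_star' a := by ext z; cases z <;> simp [continuousMapMk]

@[simp] lemma toOnePoint_coe (a : C₀(X, ℂ)) (x : X) : toOnePoint a (x : OnePoint X) = a x := rfl

@[simp] lemma toOnePoint_infty (a : C₀(X, ℂ)) : toOnePoint a ∞ = 0 := rfl

variable [LocallyCompactSpace X]

lemma exists_apply_eq_one_of_notMem {x : X} {t : Set X} (ht : IsClosed t) (hx : x ∉ t) :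
    ∃ a : C₀(X, ℂ), a x = 1 ∧ EqOn a 0 t := by
  obtain ⟨f, hf1, hf0, hfc, -⟩ := exists_continuous_one_zero_of_isCompact
    isCompact_singleton ht (disjoint_singleton_left.mpr hx)
  refine ⟨⟨⟨fun y => (f y : ℂ), by fun_prop⟩,
    (hfc.comp_left Complex.ofReal_zero).is_zero_at_infty⟩, ?_, fun y hy => ?_⟩
  · simp [hf1 (mem_singleton x)]
  · simp [hf0 hy]

lemma exists_toOnePoint_ne {x : X} {q : OnePoint X} (hxq : (x : OnePoint X) ≠ q) :
    ∃ a : C₀(X, ℂ), toOnePoint a x ≠ toOnePoint a q := by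
  induction q using OnePoint.rec with
  | infty =>
    obtain ⟨a, ha, -⟩ := exists_apply_eq_one_of_notMem isClosed_empty (notMem_empty x)
    exact ⟨a, by simp [ha]⟩
  | coe y =>
    obtain ⟨a, ha, ha0⟩ := exists_apply_eq_one_of_notMem isClosed_singleton
      (mt mem_singleton_iff.1 (mt (congrArg _) hxq))
    exact ⟨a, by simp [ha, ha0 rfl]⟩

theorem injective_eval_toOnePoint :
    Function.Injective fun (z : OnePoint X) (a : C₀(X, ℂ)) => toOnePoint a z := by
  intro p q hpq
  by_contra hne
  induction p using OnePoint.rec with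
  | infty =>
    induction q using OnePoint.rec with
    | infty => exact hne rfl
    | coe y =>
      obtain ⟨a, ha⟩ := exists_toOnePoint_ne (Ne.symm hne)
      exact ha (congrFun hpq a).symm
  | coe x =>
    obtain ⟨a, ha⟩ := exists_toOnePoint_ne hne
    exact ha (congrFun hpq a)

end ZeroAtInftyContinuousMap

namespace ContinuousMap

variable {X : Type*} [TopologicalSpace X]

noncomputable def restrictSubInfty : C(OnePoint X, ℂ) →ₗ[ℂ] C₀(X, ℂ) where
  toFun f :=
    { toFun x := f x - f ∞
      continuous_toFun := (f.continuous.comp OnePoint.continuous_coe).sub continuous_const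
      zero_at_infty' := by
        have hf : Tendsto (fun x : X => f x) (coclosedCompact X) (𝓝 (f ∞)) :=
          OnePoint.continuousAt_infty'.mp f.continuous.continuousAt
        simpa using (hf.mono_left cocompact_le_coclosedCompact).sub_const (f ∞) }
  map_add' f g := by ext x; simp; ring
  map_smul' c f := by ext x; simp; ring

@[simp] lemma restrictSubInfty_apply (f : C(OnePoint X, ℂ)) (x : X) :
    restrictSubInfty f x = f x - f ∞ := rfl

lemma restrictSubInfty_toOnePoint [T2Space X] (a : C₀(X, ℂ)) :
    restrictSubInfty (ZeroAtInftyContinuousMap.toOnePoint a) = a := by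
  ext x; simp

lemma restrictSubInfty_mul (f g : C(OnePoint X, ℂ)) :
    restrictSubInfty (f * g) = f ∞ • restrictSubInfty g + g ∞ • restrictSubInfty f +
      restrictSubInfty f * restrictSubInfty g := by
  ext x; simp; ring

lemma restrictSubInfty_star (f : C(OnePoint X, ℂ)) :
    restrictSubInfty (star f) = star (restrictSubInfty f) := by
  ext x; simp

lemma restrictSubInfty_algebraMap (c : ℂ) :
    restrictSubInfty (algebraMap ℂ C(OnePoint X, ℂ) c) = 0 := by
  ext x; simp

end ContinuousMap

namespace NonUnitalStarAlgHom

open ContinuousMap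

variable {X A : Type*} [TopologicalSpace X] [Ring A] [StarRing A] [Algebra ℂ A] [StarModule ℂ A]

/-- `C(X⁺, ℂ)` is the unitization of `C₀(X, ℂ)`; this is the unital extension of `ψ`. -/
noncomputable def extendOnePoint (ψ : C₀(X, ℂ) →⋆ₙₐ[ℂ] A) : C(OnePoint X, ℂ) →⋆ₐ[ℂ] A where
  toFun f := algebraMap ℂ A (f ∞) + ψ (restrictSubInfty f)
  map_one' := by
    have h := restrictSubInfty_algebraMap (X := X) 1
    rw [map_one] at h
    simp [h]
  map_mul' f g := by
    simp only [ContinuousMap.mul_apply, restrictSubInfty_mul, map_add, _root_.map_smul, map_mul,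
      Algebra.smul_def, mul_add, add_mul, ← Algebra.commutes (g ∞)]
    abel
  map_zero' := by simp
  map_add' f g := by simp only [ContinuousMap.add_apply, map_add]; abel
  commutes' c := by simp [restrictSubInfty_algebraMap]
  map_star' f := by
    simp only [ContinuousMap.star_apply, restrictSubInfty_star, map_star, star_add,
      algebraMap_star_comm]

lemma extendOnePoint_toOnePoint [T2Space X] (ψ : C₀(X, ℂ) →⋆ₙₐ[ℂ] A) (a : C₀(X, ℂ)) :
    ψ.extendOnePoint (ZeroAtInftyContinuousMap.toOnePoint a) = ψ a := by
  simp [extendOnePoint, restrictSubInfty_toOnePoint]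

end NonUnitalStarAlgHom

open WeakDual.CharacterSpace in
theorem StarAlgHom.exists_eq_comp {K Y : Type*} [TopologicalSpace K] [CompactSpace K]
    [T2Space K] [TopologicalSpace Y] [CompactSpace Y] [T2Space Y]
    (Φ : C(K, ℂ) →⋆ₐ[ℂ] C(Y, ℂ)) : ∃ g : C(Y, K), ∀ f, Φ f = f.comp g := by
  refine ⟨((homeoEval K ℂ).symm : C(_, K)).comp
    ((compContinuousMap Φ).comp (homeoEval Y ℂ)), fun f => ?_⟩
  ext y
  exact (congrArg (· f)
    ((homeoEval K ℂ).apply_symm_apply (compContinuousMap Φ (homeoEval Y ℂ y)))).symm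

theorem ZeroAtInftyContinuousMap.exists_toOnePoint_comp {X Y : Type*} [TopologicalSpace X]
    [T2Space X] [LocallyCompactSpace X] [TopologicalSpace Y] [CompactSpace Y] [T2Space Y]
    (ψ : C₀(X, ℂ) →⋆ₙₐ[ℂ] C(Y, ℂ)) :
    ∃ r : C(Y, OnePoint X), ∀ a, ψ a = (toOnePoint a).comp r := by
  obtain ⟨r, hr⟩ := ψ.extendOnePoint.exists_eq_comp
  exact ⟨r, fun a => by rw [← hr, NonUnitalStarAlgHom.extendOnePoint_toOnePoint]⟩

namespace ContinuousMap

variable {K Y : Type*} [TopologicalSpace K] [TopologicalSpace Y]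

def vanishingAt (y₀ : Y) : NonUnitalStarSubalgebra ℂ C(Y, ℂ) where
  carrier := {g | g y₀ = 0}
  add_mem' hf hg := by simp_all
  zero_mem' := rfl
  mul_mem' hf hg := by simp_all
  smul_mem' c f hf := by simp_all
  star_mem' hf := by simp_all

@[simp] lemma mem_vanishingAt {y₀ : Y} {g : C(Y, ℂ)} : g ∈ vanishingAt y₀ ↔ g y₀ = 0 := Iff.rfl

instance (y₀ : Y) : IsClosed (vanishingAt y₀ : Set C(Y, ℂ)) :=
  isClosed_eq (continuous_eval_const y₀) continuous_const

noncomputable def vanishingAtComp (j : C(K, Y)) (k₀ : K) :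
    vanishingAt (j k₀) →⋆ₙₐ[ℂ] vanishingAt k₀ :=
  NonUnitalStarAlgHom.codRestrict
    ((compStarAlgHom' ℂ ℂ j : C(Y, ℂ) →⋆ₙₐ[ℂ] C(K, ℂ)).comp
      (NonUnitalStarSubalgebraClass.subtype (vanishingAt (j k₀)))) _
    fun g => g.2

theorem vanishingAtComp_surjective [NormalSpace Y] {j : C(K, Y)} (hj : IsClosedEmbedding j)
    (k₀ : K) : Function.Surjective (vanishingAtComp j k₀) := by
  rintro ⟨g, hg⟩
  obtain ⟨G, rfl⟩ := g.exists_extension hj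
  exact ⟨⟨G, hg⟩, rfl⟩

end ContinuousMap

universe u v w b

open ContinuousMap ZeroAtInftyContinuousMap in
theorem WeaklyProjective.exists_approx_retraction {X : Type u} [TopologicalSpace X] [T2Space X]
    [LocallyCompactSpace X] (h : WeaklyProjective.{u, max b v, max b w} C₀(X, ℂ)) {Y : Type b}
    [TopologicalSpace Y] [CompactSpace Y] [T2Space Y] {κ : OnePoint X → Y} (hκ : IsEmbedding κ) :
    ∃ r : ℕ → C(Y, OnePoint X), (∀ n, r n (κ ∞) = ∞) ∧ ∀ a : C₀(X, ℂ),
      TendstoUniformly (fun n z => toOnePoint a (r n (κ z))) (toOnePoint a) atTop := by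
  -- `ULift` moves `Y` and `X⁺ ≃ₜ range κ` into the universes in which `h` applies
  let e : OnePoint X ≃ₜ ULift.{w} (range κ) :=
    hκ.toHomeomorph.trans Homeomorph.ulift.symm
  let j : C(ULift.{w} (range κ), ULift.{v} Y) := ⟨fun k => ⟨k.down.1⟩, by fun_prop⟩
  have : CompactSpace (ULift.{w} (range κ)) := e.compactSpace
  have hj : IsClosedEmbedding j := j.continuous.isClosedEmbedding fun k k' hkk' =>
    ULift.ext _ _ (Subtype.ext (congrArg ULift.down hkk'))
  let φ : C₀(X, ℂ) →⋆ₙₐ[ℂ] vanishingAt (e ∞) := NonUnitalStarAlgHom.codRestrict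
    ((compStarAlgHom' ℂ ℂ (e.symm : C(ULift.{w} (range κ), OnePoint X)) :
      C(OnePoint X, ℂ) →⋆ₙₐ[ℂ] C(ULift.{w} (range κ), ℂ)).comp toOnePoint) _ fun a => by simp
  obtain ⟨φₙ, hφₙ⟩ := h _ _ (vanishingAtComp j (e ∞)) (vanishingAtComp_surjective hj _) φ
  choose r hr using fun n => exists_toOnePoint_comp
    ((NonUnitalStarSubalgebraClass.subtype (vanishingAt (j (e ∞)))).comp (φₙ n))
  refine ⟨fun n => (r n).comp ⟨ULift.up, by fun_prop⟩,
    fun n => injective_eval_toOnePoint (funext fun a => ?_), fun a => ?_⟩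
  · change toOnePoint a (r n (j (e ∞))) = toOnePoint a ∞
    rw [toOnePoint_infty, ← (φₙ n a).2]
    exact congrArg (· (j (e ∞))) (hr n a).symm
  · have hconv := ContinuousMap.tendsto_iff_tendstoUniformly.1 <|
      continuous_subtype_val.continuousAt.tendsto.comp
        (tendsto_iff_norm_sub_tendsto_zero.2 (hφₙ a))
    convert hconv.comp e using 1
    · ext n z
      exact congrArg (· (j (e z))) (hr n a).symm
    · ext z
      simp [φ]

theorem statement9_general (X : Type*) [TopologicalSpace X] [T2Space X]
    [LocallyCompactSpace X] (h : WeaklyProjective C₀(X, ℂ)) :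
    IsPointedAAR (OnePoint X) (∞ : OnePoint X) := by
  intro Y _ _ _ ι hι _
  -- a copy of `Y` in `Type`, to which `WeaklyProjective.exists_approx_retraction` applies
  obtain ⟨s, hs⟩ := exists_embedding_l_infty Y
  have : CompactSpace (range s) := isCompact_iff_compactSpace.1 (isCompact_range hs.continuous)
  have hs₀ : IsEmbedding (rangeFactorization s) := hs.codRestrict _ mem_range_self
  obtain ⟨r, hr_infty, hr⟩ := h.exists_approx_retraction (hs₀.comp hι)
  exact ⟨fun n => r n ∘ rangeFactorization s, fun n => (r n).continuous.comp hs₀.continuous,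
    hr_infty, tendstoUniformlyCompat_of_injective
      (fun a => (ZeroAtInftyContinuousMap.toOnePoint a).continuous)
      ZeroAtInftyContinuousMap.injective_eval_toOnePoint hr⟩

theorem statement9 (X : Type*) [TopologicalSpace X] [T2Space X]
    [LocallyCompactSpace X] [SecondCountableTopology X] [MetrizableSpace X]
    (h : WeaklyProjective C₀(X, ℂ)) :
    IsPointedAAR (OnePoint X) (∞ : OnePoint X) :=
  statement9_general X h
end

section
/- Let X be a locally compact, second countable, metrizable Hausdorff space. If the C*-algebra C₀(X, ℂ) of continuous complex-valued functions on X vanishing at infinity is weakly projective with respect to unital C*-algebras, then the one-point compactification X⁺ of X is an approximative absolute retract. -/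
open Filter Topology Set TopologicalSpace

open Filter Topology TopologicalSpace

open ZeroAtInfty OnePoint

/-!
Embed `X⁺` into a compactum `Y` by `ι`. Restriction `C(Y, ℂ) → C(X⁺, ℂ)` is a unital surjection
(Tietze), so weak projectivity lifts extension by zero `C₀(X, ℂ) → C(X⁺, ℂ)` approximately to
⋆-homomorphisms `C₀(X, ℂ) → C(Y, ℂ)`. Since `C(X⁺, ℂ)` is the unitization of `C₀(X, ℂ)`, these
extend to unital ⋆-homomorphisms `C(X⁺, ℂ) → C(Y, ℂ)`, which by Gelfand duality are composition
with continuous maps `rₙ : Y → X⁺`. The approximate lifting then says `F ∘ rₙ ∘ ι → F` uniformly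
for every `F ∈ C(X⁺, ℂ)`, and testing against distance functions turns this into uniform
convergence `rₙ ∘ ι → id`.
-/

universe u v w

namespace OnePoint

variable {X : Type*} [TopologicalSpace X] [R1Space X]

noncomputable def extendByZero (a : C₀(X, ℂ)) : C(OnePoint X, ℂ) :=
  continuousMapMk a 0 <| by
    rw [coclosedCompact_eq_cocompact]; exact zero_at_infty a

@[simp] lemma extendByZero_coe (a : C₀(X, ℂ)) (x : X) : extendByZero a x = a x := rfl

@[simp] lemma extendByZero_infty (a : C₀(X, ℂ)) : extendByZero a ∞ = 0 := rfl

noncomputable def restrictSubInfty (F : C(OnePoint X, ℂ)) : C₀(X, ℂ) where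
  toFun x := F x - F ∞
  continuous_toFun := (F.continuous.comp continuous_coe).sub continuous_const
  zero_at_infty' := by
    have hF : Tendsto (fun x : X => F x) (cocompact X) (𝓝 (F ∞)) :=
      (F.continuous.tendsto ∞).comp (coclosedCompact_eq_cocompact (X := X) ▸ tendsto_coe_infty)
    simpa using hF.sub_const (F ∞)

@[simp] lemma restrictSubInfty_apply (F : C(OnePoint X, ℂ)) (x : X) :
    restrictSubInfty F x = F x - F ∞ := rfl

noncomputable def unitizationStarAlgEquiv : C(OnePoint X, ℂ) ≃⋆ₐ[ℂ] Unitization ℂ C₀(X, ℂ) where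
  toFun F := Unitization.inl (F ∞) + Unitization.inr (restrictSubInfty F)
  invFun x := algebraMap ℂ _ x.fst + extendByZero x.snd
  left_inv F := by ext p; induction p using OnePoint.rec <;> simp
  right_inv x := by ext <;> simp
  map_mul' F G := by ext <;> simp; ring
  map_add' F G := by ext <;> simp [add_sub_add_comm]
  map_star' F := by ext <;> simp
  map_smul' c F := by ext <;> simp [mul_sub]

end OnePoint

open WeakDual.CharacterSpace in
theorem StarAlgHom.exists_eq_compStarAlgHom' {Y Z : Type*} [TopologicalSpace Y] [CompactSpace Y]
    [T2Space Y] [TopologicalSpace Z] [CompactSpace Z] [T2Space Z]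
    (Θ : C(Z, ℂ) →⋆ₐ[ℂ] C(Y, ℂ)) : ∃ r : C(Y, Z), ContinuousMap.compStarAlgHom' ℂ ℂ r = Θ := by
  refine ⟨((homeoEval Z ℂ).symm : C(_, Z)).comp ((compContinuousMap Θ).comp (homeoEval Y ℂ)), ?_⟩
  ext F y
  exact congrArg (· F) ((homeoEval Z ℂ).apply_symm_apply _)

theorem WeaklyProjectiveWrtUnital.exists_tendsto_starLift {A : Type*} [NonUnitalCStarAlgebra A]
    (h : WeaklyProjectiveWrtUnital.{_, u, v} A) {B : Type u} {C : Type v} [CStarAlgebra B]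
    [CStarAlgebra C] (ρ : B →⋆ₐ[ℂ] C) (hρ : Function.Surjective ρ)
    (τ : Unitization ℂ A →⋆ₐ[ℂ] C) :
    ∃ Θ : ℕ → (Unitization ℂ A →⋆ₐ[ℂ] B), ∀ x, Tendsto (fun n => ρ (Θ n x)) atTop (𝓝 (τ x)) := by
  obtain ⟨ψ, hψ⟩ := h B C ρ hρ (Unitization.starLift.symm τ)
  refine ⟨fun n => Unitization.starLift (ψ n), fun x => ?_⟩
  have hτ : τ x = algebraMap ℂ C x.fst + τ x.snd := by
    conv_lhs => rw [← x.inl_fst_add_inr_snd_eq]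
    rw [map_add, ← Unitization.algebraMap_eq_inl, AlgHomClass.commutes]
  have hlift : ∀ n, ρ (Unitization.starLift (ψ n) x) = algebraMap ℂ C x.fst + ρ (ψ n x.snd) :=
    fun n => by rw [← AlgHomClass.commutes ρ, ← map_add]; rfl
  simp only [hlift, hτ]
  exact (tendsto_iff_norm_sub_tendsto_zero.2 (hψ x.snd)).const_add _

theorem WeaklyProjectiveWrtUnital.exists_tendsto_comp_comp {X : Type*} [TopologicalSpace X]
    [T2Space X] [LocallyCompactSpace X] (h : WeaklyProjectiveWrtUnital.{_, u, v} C₀(X, ℂ))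
    {Y : Type u} [TopologicalSpace Y] [CompactSpace Y] [T2Space Y] {Z : Type v}
    [TopologicalSpace Z] (g : Z ≃ₜ OnePoint X) (ι : C(OnePoint X, Y))
    (hι : IsClosedEmbedding ι) :
    ∃ r : ℕ → C(Y, OnePoint X), ∀ F : C(OnePoint X, ℂ),
      Tendsto (fun n => F.comp ((r n).comp ι)) atTop (𝓝 F) := by
  -- `h` only provides lifts between algebras in the universes `u` and `v`; the quotient algebra
  -- is therefore `C(Z, ℂ)` for the copy `Z` of `X⁺`, rather than `C(X⁺, ℂ)`.
  have := g.symm.compactSpace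
  let j : C(Z, Y) := ι.comp g
  let ρ := ContinuousMap.compStarAlgHom' ℂ ℂ j
  have hρ : Function.Surjective ρ := fun G => G.exists_extension (hι.comp g.isClosedEmbedding)
  let e := OnePoint.unitizationStarAlgEquiv (X := X)
  let τ := (ContinuousMap.compStarAlgHom' ℂ ℂ (g : C(Z, OnePoint X))).comp e.symm.toStarAlgHom
  obtain ⟨Θ, hΘ⟩ := h.exists_tendsto_starLift ρ hρ τ
  choose r hr using fun n => ((Θ n).comp e.toStarAlgHom).exists_eq_compStarAlgHom'
  refine ⟨r, fun F => ?_⟩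
  have hρΘ : ∀ n, ρ (Θ n (e F)) = (F.comp ((r n).comp ι)).comp g := fun n => by
    ext z
    simpa [ρ, j] using congrArg (fun Φ => Φ F (ι (g z))) (hr n).symm
  have hτ : τ (e F) = F.comp g := by ext; simp [τ]
  have hcomp := ((ContinuousMap.continuous_precomp (g.symm : C(OnePoint X, Z))).tendsto _).comp
    (hΘ (e F))
  have hcancel : ∀ G : C(OnePoint X, ℂ), (G.comp g).comp (g.symm : C(OnePoint X, Z)) = G :=
    fun G => by ext; simp
  simpa only [Function.comp_def, hρΘ, hτ, hcancel] using hcomp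

theorem tendstoUniformlyCompat_of_forall_tendstoUniformly {W Z : Type*} [TopologicalSpace Z]
    [CompactSpace Z] {s : ℕ → W → Z} {f : W → Z}
    (h : ∀ F : C(Z, ℂ), TendstoUniformly (fun n => F ∘ s n) (F ∘ f) atTop) :
    TendstoUniformlyCompat s f := by
  rintro m rfl
  let _ : MetricSpace Z := m
  rw [Metric.tendstoUniformly_iff]
  intro ε hε
  obtain ⟨t, -, ht, hcover⟩ :=
    finite_cover_balls_of_compact (isCompact_univ : IsCompact (univ : Set Z))
      (by positivity : 0 < ε / 3)
  -- the distances to the points of an `ε / 3`-net are the test functions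
  let d : Z → C(Z, ℂ) := fun q => ⟨fun x => (dist x q : ℂ), by fun_prop⟩
  have hd : ∀ᶠ n in atTop, ∀ q ∈ t, ∀ w, |dist (f w) q - dist (s n w) q| < ε / 3 := by
    refine ht.eventually_all.2 fun q _ => ?_
    simpa [d, Complex.isometry_ofReal.dist_eq, Real.dist_eq] using
      Metric.tendstoUniformly_iff.1 (h (d q)) (ε / 3) (by positivity)
  filter_upwards [hd] with n hn w
  obtain ⟨q, hq, hwq⟩ := mem_iUnion₂.1 (hcover (mem_univ (f w)))
  have hwq' : dist (f w) q < ε / 3 := hwq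
  have hnq := (abs_lt.1 (hn q hq w)).1
  calc dist (f w) (s n w) ≤ dist (f w) q + dist (s n w) q := dist_triangle_right _ _ _
    _ < ε := by linarith

theorem exists_homeomorph_of_isEmbedding {W : Type*} {E : Type w} [TopologicalSpace W]
    [TopologicalSpace E] {f : W → E} (hf : IsEmbedding f) :
    ∃ (V : Type (max u w)) (_ : TopologicalSpace V), Nonempty (V ≃ₜ W) :=
  ⟨ULift.{u} (range f), inferInstance, ⟨Homeomorph.ulift.trans hf.toHomeomorph.symm⟩⟩

theorem statement12_general (X : Type*) [TopologicalSpace X] [T2Space X]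
    [LocallyCompactSpace X] (h : WeaklyProjectiveWrtUnital C₀(X, ℂ)) :
    IsAAR (OnePoint X) := by
  intro Y _ _ _ ι hι hclosed
  obtain ⟨f, hf⟩ := exists_embedding_l_infty Y
  obtain ⟨Y', _, ⟨eY⟩⟩ := exists_homeomorph_of_isEmbedding hf
  obtain ⟨Z, _, ⟨g⟩⟩ := exists_homeomorph_of_isEmbedding (hf.comp hι)
  have := eY.symm.compactSpace
  have := eY.symm.t2Space
  obtain ⟨r, hr⟩ := h.exists_tendsto_comp_comp g ((eY.symm : C(Y, Y')).comp ⟨ι, hι.continuous⟩)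
    (eY.symm.isClosedEmbedding.comp ⟨hι, hclosed⟩)
  refine ⟨fun n => r n ∘ eY.symm, fun n => (r n).continuous.comp eY.symm.continuous, ?_⟩
  exact tendstoUniformlyCompat_of_forall_tendstoUniformly fun F =>
    ContinuousMap.tendsto_iff_tendstoUniformly.1 (hr F)

theorem statement12 (X : Type*) [TopologicalSpace X] [T2Space X]
    [LocallyCompactSpace X] [SecondCountableTopology X] [MetrizableSpace X]
    (h : WeaklyProjectiveWrtUnital C₀(X, ℂ)) :
    IsAAR (OnePoint X) :=
  statement12_general X h
end

section
/- Let A and B be separable C*-algebras. If A is weakly projective with respect to unital C*-algebras and the unitizations Ã and B̃ are isomorphic as C*-algebras (via a star algebra isomorphism), then B is weakly projective with respect to unital C*-algebras. -/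
open Filter Topology TopologicalSpace

/-!
An approximate lift `φₙ : A → B'` of `φ : A → C'` along a unital surjection `ρ : B' → C'`
extends to the approximate lift `starLift φₙ` of `starLift φ : Ã → C'`, because the scalar
parts cancel. Composing with `B ↪ B̃ ≅ Ã` then turns approximate lifts of the map
`A → C'` corresponding to `φ : B → C'` into approximate lifts of `φ`.

That argument keeps the universes of the test algebras `B'` and `C'` fixed, while the conclusion
quantifies over all universes. This is where separability of `B` enters: a lifting problem for
`B` restricts to separable closed subalgebras `B₀ ↠ C₀` (surjectivity of the restriction comes
from the open mapping theorem and a series argument), and separable C⋆-algebras have copies in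
every universe.
-/

universe u v w₁ w₂ w₃ w₄

open scoped CStarAlgebra

theorem surjective_of_approx_preimage {E F : Type*} [NormedAddCommGroup E] [CompleteSpace E]
    [NormedAddCommGroup F] (f : E →+ F) (hf : Continuous f) {C : ℝ}
    (h : ∀ y, ∃ x, ‖x‖ ≤ C * ‖y‖ ∧ ‖y - f x‖ ≤ 1 / 2 * ‖y‖) : Function.Surjective f := by
  choose g hg using h
  intro y
  set r : F → F := fun z => z - f (g z)
  have hr : ∀ n, ‖r^[n] y‖ ≤ (1 / 2) ^ n * ‖y‖ := by
    intro n
    induction n with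
    | zero => simp
    | succ n ih =>
      rw [Function.iterate_succ_apply', pow_succ', mul_assoc]
      exact (hg _).2.trans (by gcongr)
  set u : ℕ → E := fun n => g (r^[n] y)
  have hu : ∀ n, ‖u n‖ ≤ |C| * ‖y‖ * (1 / 2) ^ n := fun n => calc
    ‖u n‖ ≤ C * ‖r^[n] y‖ := (hg _).1
    _ ≤ |C| * ((1 / 2) ^ n * ‖y‖) := by gcongr; exacts [le_abs_self C, hr n]
    _ = |C| * ‖y‖ * (1 / 2) ^ n := by ring
  have hsum : Summable u := .of_norm_bounded (summable_geometric_two.mul_left _) hu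
  have hpartial : ∀ n, f (∑ i ∈ Finset.range n, u i) = y - r^[n] y := by
    intro n
    induction n with
    | zero => simp
    | succ n ih =>
      rw [Finset.sum_range_succ, map_add, ih, Function.iterate_succ_apply']
      simp only [r, u]
      abel
  have hr0 : Tendsto (fun n => r^[n] y) atTop (𝓝 0) := by
    refine squeeze_zero_norm hr ?_
    simpa using (tendsto_pow_atTop_nhds_zero_of_lt_one (by norm_num : (0 : ℝ) ≤ 1 / 2)
      (by norm_num)).mul_const ‖y‖
  refine ⟨∑' n, u n, tendsto_nhds_unique ((hf.tendsto _).comp hsum.hasSum.tendsto_sum_nat) ?_⟩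
  simpa [Function.comp_def, hpartial] using tendsto_const_nhds.sub hr0

theorem Set.Countable.submonoid_closure {M : Type*} [Monoid M] {s : Set M} (hs : s.Countable) :
    (Submonoid.closure s : Set M).Countable := by
  have := hs.to_subtype
  rw [Submonoid.closure_eq_mrange, MonoidHom.coe_mrange]
  exact Set.countable_range _

theorem Set.Countable.isSeparable_starAlgebra_adjoin {A : Type*} [Semiring A] [StarRing A]
    [Algebra ℂ A] [StarModule ℂ A] [TopologicalSpace A] [ContinuousAdd A] [ContinuousSMul ℂ A]
    {s : Set A} (hs : s.Countable) : IsSeparable (StarAlgebra.adjoin ℂ s : Set A) := by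
  have hspan : (StarAlgebra.adjoin ℂ s : Set A) =
      Submodule.span ℂ (Submonoid.closure (s ∪ star s) : Set A) := by
    rw [← Algebra.adjoin_eq_span, ← StarAlgebra.adjoin_toSubalgebra]
    rfl
  rw [hspan]
  have hs' : (s ∪ star s).Countable := hs.union (by simpa [Set.image_star] using hs.image star)
  exact .span hs'.submonoid_closure.isSeparable

theorem StarAlgHom.exists_isSeparable_map_eq {B C : Type*} [CStarAlgebra B] [CStarAlgebra C]
    (ρ : B →⋆ₐ[ℂ] C) (hρ : Function.Surjective ρ) {S : Set C} (hS : IsSeparable S) :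
    ∃ (B₀ : StarSubalgebra ℂ B) (C₀ : StarSubalgebra ℂ C), IsClosed (B₀ : Set B) ∧
      IsClosed (C₀ : Set C) ∧ IsSeparable (B₀ : Set B) ∧ IsSeparable (C₀ : Set C) ∧
      S ⊆ C₀ ∧ B₀.map ρ = C₀ := by
  obtain ⟨t, htc, hSt⟩ := hS
  set C₀ := (StarAlgebra.adjoin ℂ t).topologicalClosure
  have hC₀ : IsClosed (C₀ : Set C) := StarSubalgebra.isClosed_topologicalClosure _
  have hC₀sep : IsSeparable (C₀ : Set C) := by
    rw [StarSubalgebra.topologicalClosure_coe]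
    exact htc.isSeparable_starAlgebra_adjoin.closure
  obtain ⟨D, hDC₀, hDc, hC₀D⟩ := hC₀sep.exists_countable_dense_subset
  obtain ⟨K, hK, hpre⟩ :=
    ContinuousLinearMap.exists_preimage_norm_le ⟨ρ.toLinearMap, map_continuous ρ⟩ hρ
  choose g hρg hg using hpre
  replace hρg : ∀ y, ρ (g y) = y := hρg
  set B₀ := (StarAlgebra.adjoin ℂ (g '' D)).topologicalClosure
  have hB₀ : IsClosed (B₀ : Set B) := StarSubalgebra.isClosed_topologicalClosure _
  have hgB₀ : ∀ d ∈ D, g d ∈ B₀ := fun d hd =>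
    StarSubalgebra.le_topologicalClosure _ (StarAlgebra.subset_adjoin ℂ _ ⟨d, hd, rfl⟩)
  have hmaps : B₀ ≤ C₀.comap ρ := by
    refine StarSubalgebra.topologicalClosure_minimal (StarAlgebra.adjoin_le ?_)
      (hC₀.preimage (map_continuous ρ))
    rintro _ ⟨d, hd, rfl⟩
    change ρ (g d) ∈ C₀
    exact (hρg d).symm ▸ hDC₀ hd
  let ρ₀ : B₀ →⋆ₐ[ℂ] C₀ := (ρ.comp B₀.subtype).codRestrict C₀ fun b => hmaps b.2
  have hρ₀ : Function.Surjective ρ₀ := by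
    refine surjective_of_approx_preimage (ρ₀ : B₀ →+ C₀) (map_continuous ρ₀) (C := 2 * K)
      fun y => ?_
    rcases eq_or_ne y 0 with rfl | hy
    · exact ⟨0, by simp⟩
    have hny : ‖(y : C)‖ = ‖y‖ := rfl
    obtain ⟨d, hd, hyd⟩ := Metric.mem_closure_iff.1 (hC₀D y.2) (‖y‖ / 2) (by positivity)
    refine ⟨⟨g d, hgB₀ d hd⟩, ?_, ?_⟩
    · calc ‖g d‖ ≤ K * ‖d‖ := hg d
        _ ≤ K * (‖(y : C)‖ + ‖(y : C)‖) := by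
          gcongr
          have := norm_le_norm_add_norm_sub' d (y : C)
          rw [← dist_eq_norm'] at this
          linarith [norm_nonneg y]
        _ = 2 * K * ‖y‖ := by rw [hny]; ring
    · change ‖(y : C) - ρ (g d)‖ ≤ 1 / 2 * ‖y‖
      rw [hρg, ← dist_eq_norm]
      exact hyd.le.trans_eq (by ring)
  refine ⟨B₀, C₀, hB₀, hC₀, ?_, hC₀sep, hSt.trans ?_, le_antisymm
    (StarSubalgebra.map_le_iff_le_comap.2 hmaps) fun c hc => ?_⟩
  · rw [StarSubalgebra.topologicalClosure_coe]
    exact (hDc.image g).isSeparable_starAlgebra_adjoin.closure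
  · rw [StarSubalgebra.topologicalClosure_coe]
    exact closure_mono (StarAlgebra.subset_adjoin ℂ t)
  · obtain ⟨b, hb⟩ := hρ₀ ⟨c, hc⟩
    exact ⟨b, b.2, congrArg Subtype.val hb⟩

namespace Equiv

variable {α β : Type*} [CStarAlgebra β] (e : α ≃ β)

protected noncomputable abbrev cstarAlgebra : CStarAlgebra α :=
  letI := e.normedRing
  letI := e.starRing
  letI := e.algebra ℂ
  letI : NormedAlgebra ℂ α := NormedAlgebra.induced ℂ α β (e.algEquiv ℂ)
  haveI := e.starModule ℂ
  have he : Isometry e := AddMonoidHomClass.isometry_of_norm e.ringEquiv fun _ => rfl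
  { toCompleteSpace := (he.isUniformInducing.completeSpace_congr e.surjective).2 inferInstance
    norm_mul_self_le x := by
      change ‖e x‖ * ‖e x‖ ≤ ‖e (e.symm (e (e.symm (star (e x))) * e x))‖
      simp [CStarRing.norm_star_mul_self] }

noncomputable def starAlgEquiv :
    letI := e.cstarAlgebra
    α ≃⋆ₐ[ℂ] β :=
  letI := e.cstarAlgebra
  { e with
    map_add' _ _ := e.apply_symm_apply _
    map_mul' _ _ := e.apply_symm_apply _
    map_smul' _ _ := e.apply_symm_apply _
    map_star' _ := e.apply_symm_apply _ }

end Equiv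

theorem small_of_separableSpace (X : Type*) [MetricSpace X] [SeparableSpace X] : Small.{u} X :=
  let ⟨_, hf⟩ := KuratowskiEmbedding.exists_isometric_embedding X
  small_of_injective hf.injective

theorem exists_starAlgEquiv_of_separableSpace (X : Type*) [CStarAlgebra X] [SeparableSpace X] :
    ∃ (Y : Type u) (_ : CStarAlgebra Y), Nonempty (Y ≃⋆ₐ[ℂ] X) :=
  have := small_of_separableSpace.{u} X
  ⟨Shrink X, (equivShrink X).symm.cstarAlgebra, ⟨(equivShrink X).symm.starAlgEquiv⟩⟩

section ApproxLiftable

variable {A A' B B' C C' : Type*} [NonUnitalCStarAlgebra A] [NonUnitalCStarAlgebra A']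
  [CStarAlgebra B] [CStarAlgebra B'] [CStarAlgebra C] [CStarAlgebra C']

def ApproxLiftable (ρ : B →⋆ₐ[ℂ] C) (φ : A →⋆ₙₐ[ℂ] C) : Prop :=
  ∃ φₙ : ℕ → (A →⋆ₙₐ[ℂ] B), ∀ a : A, Tendsto (fun n => ‖ρ (φₙ n a) - φ a‖) atTop (𝓝 0)

variable {ρ : B →⋆ₐ[ℂ] C} {φ : A →⋆ₙₐ[ℂ] C}

theorem ApproxLiftable.comp (h : ApproxLiftable ρ φ) (θ : A' →⋆ₙₐ[ℂ] A) :
    ApproxLiftable ρ (φ.comp θ) :=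
  let ⟨φₙ, hφₙ⟩ := h
  ⟨fun n => (φₙ n).comp θ, fun a => hφₙ (θ a)⟩

theorem ApproxLiftable.map (h : ApproxLiftable ρ φ) {ρ' : B' →⋆ₐ[ℂ] C'} (ι : B →⋆ₐ[ℂ] B')
    (κ : C →⋆ₐ[ℂ] C') (hcomm : ∀ b, ρ' (ι b) = κ (ρ b)) :
    ApproxLiftable ρ' ((κ : C →⋆ₙₐ[ℂ] C').comp φ) := by
  obtain ⟨φₙ, hφₙ⟩ := h
  refine ⟨fun n => (ι : B →⋆ₙₐ[ℂ] B').comp (φₙ n), fun a => ?_⟩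
  refine squeeze_zero (fun _ => norm_nonneg _) (fun n => ?_) (hφₙ a)
  calc ‖ρ' (ι (φₙ n a)) - κ (φ a)‖ = ‖κ (ρ (φₙ n a) - φ a)‖ := by rw [hcomm, map_sub]
    _ ≤ ‖ρ (φₙ n a) - φ a‖ := NonUnitalStarAlgHom.norm_apply_le κ _

theorem ApproxLiftable.starLift (h : ApproxLiftable ρ φ) :
    ApproxLiftable ρ (Unitization.starLift φ : Unitization ℂ A →⋆ₙₐ[ℂ] C) := by
  obtain ⟨φₙ, hφₙ⟩ := h
  refine ⟨fun n => Unitization.starLift (φₙ n), fun x => ?_⟩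
  refine (hφₙ x.snd).congr fun n => congrArg norm ?_
  change _ = ρ (algebraMap ℂ B x.fst + φₙ n x.snd) - (algebraMap ℂ C x.fst + φ x.snd)
  rw [map_add, AlgHomClass.commutes, add_sub_add_left_eq_sub]

end ApproxLiftable

theorem WeaklyProjectiveWrtUnital.of_unitization_starAlgEquiv {A : Type u} {B : Type v}
    [NonUnitalCStarAlgebra A] [NonUnitalCStarAlgebra B]
    (hA : WeaklyProjectiveWrtUnital.{u, w₁, w₂} A) (e : Unitization ℂ A ≃⋆ₐ[ℂ] Unitization ℂ B) :
    WeaklyProjectiveWrtUnital.{v, w₁, w₂} B := by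
  intro B' C' _ _ ρ hρ φ
  let φA : A →⋆ₙₐ[ℂ] C' := Unitization.starLift.symm ((Unitization.starLift φ).comp e)
  have hφA : Unitization.starLift φA = (Unitization.starLift φ).comp e :=
    Unitization.starLift.apply_symm_apply _
  let ι : B →⋆ₙₐ[ℂ] Unitization ℂ A :=
    (e.symm : Unitization ℂ B →⋆ₙₐ[ℂ] Unitization ℂ A).comp (Unitization.inrNonUnitalStarAlgHom ℂ B)
  have h := (show ApproxLiftable ρ φA from hA B' C' ρ hρ φA).starLift.comp ι
  change ApproxLiftable ρ φ
  convert h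
  ext b
  change φ b = Unitization.starLift φA (e.symm b)
  rw [hφA, StarAlgHom.comp_apply, StarAlgHom.coe_coe, e.apply_symm_apply,
    ← Unitization.starLift_symm_apply_apply, Equiv.symm_apply_apply]

theorem WeaklyProjectiveWrtUnital.univ_transfer {B : Type u} [NonUnitalCStarAlgebra B]
    [SeparableSpace B]
    (hB : WeaklyProjectiveWrtUnital.{u, w₁, w₂} B) : WeaklyProjectiveWrtUnital.{u, w₃, w₄} B := by
  intro B' C' _ _ ρ hρ φ
  obtain ⟨B₀, C₀, hB₀, hC₀, hB₀sep, hC₀sep, hφC₀, hmap⟩ :=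
    ρ.exists_isSeparable_map_eq hρ (isSeparable_range (map_continuous φ))
  have : SeparableSpace B₀ := hB₀sep.separableSpace
  have : SeparableSpace C₀ := hC₀sep.separableSpace
  obtain ⟨P, _, ⟨eP⟩⟩ := exists_starAlgEquiv_of_separableSpace.{w₁} B₀
  obtain ⟨Q, _, ⟨eQ⟩⟩ := exists_starAlgEquiv_of_separableSpace.{w₂} C₀
  let ρ₀ : B₀ →⋆ₐ[ℂ] C₀ := (ρ.comp B₀.subtype).codRestrict C₀ fun b => hmap ▸ ⟨b, b.2, rfl⟩
  let ρ' : P →⋆ₐ[ℂ] Q := (eQ.symm : C₀ →⋆ₐ[ℂ] Q).comp (ρ₀.comp eP)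
  have hρ' : Function.Surjective ρ' := by
    intro q
    obtain ⟨b, hb, hρb⟩ : (eQ q : C') ∈ B₀.map ρ := hmap ▸ (eQ q).2
    refine ⟨eP.symm ⟨b, hb⟩, eQ.symm_apply_eq.2 (Subtype.ext ?_)⟩
    simpa [ρ₀] using hρb
  let φ₀ : B →⋆ₙₐ[ℂ] C₀ :=
    NonUnitalStarAlgHom.codRestrict φ C₀.toNonUnitalStarSubalgebra fun b => hφC₀ ⟨b, rfl⟩
  let φ' : B →⋆ₙₐ[ℂ] Q := (eQ.symm : C₀ →⋆ₙₐ[ℂ] Q).comp φ₀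
  have h := (show ApproxLiftable ρ' φ' from hB P Q ρ' hρ' φ').map (ρ' := ρ)
    (B₀.subtype.comp eP) (C₀.subtype.comp eQ) fun p => by simp [ρ', ρ₀]
  change ApproxLiftable ρ φ
  convert h
  ext b
  exact congrArg Subtype.val (eQ.apply_symm_apply (φ₀ b)).symm

theorem statement13_general (A B : Type*) [NonUnitalCStarAlgebra A] [NonUnitalCStarAlgebra B]
    [SeparableSpace B]
    (hA : WeaklyProjectiveWrtUnital A)
    (e : Unitization ℂ A ≃⋆ₐ[ℂ] Unitization ℂ B) :
    WeaklyProjectiveWrtUnital B :=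
  (hA.of_unitization_starAlgEquiv e).univ_transfer

theorem statement13 (A B : Type*) [NonUnitalCStarAlgebra A] [NonUnitalCStarAlgebra B]
    [SeparableSpace A] [SeparableSpace B]
    (hA : WeaklyProjectiveWrtUnital A)
    (e : Unitization ℂ A ≃⋆ₐ[ℂ] Unitization ℂ B) :
    WeaklyProjectiveWrtUnital B :=
  statement13_general A B hA e
end

section
/- Let A and B be separable C*-algebras, let ρ : A → B be a surjective *-homomorphism, and suppose there is a sequence of *-homomorphisms λₙ : B → A such that ‖ρ(λₙ(b)) − b‖ → 0 for every b ∈ B (i.e., B is an approximate retract of A). If A is residually finite dimensional, then B is residually finite dimensional. -/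
open Filter Topology TopologicalSpace

/-- A C⋆-algebra `A` is residually finite dimensional (RFD) if for every
nonzero `a ∈ A` there are `n ≥ 1` and a ⋆-homomorphism `π` from `A` to the
`n × n` complex matrices with `π a ≠ 0`. -/
def ResiduallyFiniteDimensional (A : Type*) [NonUnitalCStarAlgebra A] : Prop :=
  ∀ a : A, a ≠ 0 → ∃ n : ℕ, 1 ≤ n ∧
    ∃ π : A →⋆ₙₐ[ℂ] Matrix (Fin n) (Fin n) ℂ, π a ≠ 0

theorem exists_ne_zero_of_tendsto_norm_map_sub {F X Y : Type*} [Zero X] [NormedAddCommGroup Y]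
    [FunLike F X Y] [ZeroHomClass F X Y] (f : F) {x : ℕ → X} {y : Y} (hy : y ≠ 0)
    (hx : Tendsto (fun n => ‖f (x n) - y‖) atTop (𝓝 0)) :
    ∃ n, x n ≠ 0 := by
  obtain ⟨n, hn⟩ := (hx.eventually (eventually_lt_nhds (norm_pos_iff.mpr hy))).exists
  refine ⟨n, fun hxn => hn.ne ?_⟩
  rw [hxn, map_zero, zero_sub, norm_neg]

theorem ResiduallyFiniteDimensional.of_separating_homs {A B : Type*} [NonUnitalCStarAlgebra A]
    [NonUnitalCStarAlgebra B] (hA : ResiduallyFiniteDimensional A)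
    (hsep : ∀ b : B, b ≠ 0 → ∃ φ : B →⋆ₙₐ[ℂ] A, φ b ≠ 0) :
    ResiduallyFiniteDimensional B := by
  intro b hb
  obtain ⟨φ, hφ⟩ := hsep b hb
  obtain ⟨n, hn, π, hπ⟩ := hA (φ b) hφ
  exact ⟨n, hn, π.comp φ, hπ⟩

theorem statement16_general (A B : Type*) [NonUnitalCStarAlgebra A] [NonUnitalCStarAlgebra B]
    (ρ : A →⋆ₙₐ[ℂ] B)
    (lam : ℕ → (B →⋆ₙₐ[ℂ] A))
    (hlam : ∀ b : B, Tendsto (fun n => ‖ρ (lam n b) - b‖) atTop (𝓝 0))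
    (hA : ResiduallyFiniteDimensional A) :
    ResiduallyFiniteDimensional B :=
  hA.of_separating_homs fun b hb =>
    let ⟨n, hn⟩ := exists_ne_zero_of_tendsto_norm_map_sub ρ hb (hlam b)
    ⟨lam n, hn⟩

theorem statement16 (A B : Type*) [NonUnitalCStarAlgebra A] [NonUnitalCStarAlgebra B]
    [SeparableSpace A] [SeparableSpace B]
    (ρ : A →⋆ₙₐ[ℂ] B) (hρ : Function.Surjective ρ)
    (lam : ℕ → (B →⋆ₙₐ[ℂ] A))
    (hlam : ∀ b : B, Tendsto (fun n => ‖ρ (lam n b) - b‖) atTop (𝓝 0))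
    (hA : ResiduallyFiniteDimensional A) :
    ResiduallyFiniteDimensional B :=
  statement16_general A B ρ lam hlam hA
end
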